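/- For fixed T > 0, consider G₄(s;L,T) := T / (4 L^{1+2s} ζ(2s)) on s ∈ (1/2, 1) and L^* := exp(−ζ'(2)/ζ(2)). If L ≤ L^* then G₄(·;L,T) is strictly increasing on (1/2, 1), so its supremum is attained (only) in the limit s → 1; if L > L^* then there is a unique s_L ∈ (1/2, 1) maximizing G₄(·;L,T), with dG₄/ds > 0 exactly on (1/2, s_L), and s_L → 1/2 as L → +∞. -/

import Mathlib

open Real Set Filter

/-- The Riemann zeta function restricted to real arguments
(analytic continuation, real part). -/
noncomputable def zetaR (x : ℝ) : ℝ := (riemannZeta (x : ℂ)).re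

/-- The derivative of the Riemann zeta function at real arguments (real part). -/
noncomputable def zetaR' (x : ℝ) : ℝ := (deriv riemannZeta (x : ℂ)).re

/-- `G₄(s;L,T) = T / (4 L^(1+2s) ζ(2s))`. -/
noncomputable def G4 (s L T : ℝ) : ℝ := T / (4 * L^(1+2*s) * zetaR (2*s))

/-- The critical sparseness `L* = exp(-ζ'(2)/ζ(2))`. -/
noncomputable def Lstar : ℝ := Real.exp (-(zetaR' 2 / zetaR 2))

namespace S17

section VonMangoldt
open ArithmeticFunction

noncomputable def Lser (x : ℝ) : ℝ := ∑' n : ℕ, Λ n / (n : ℝ) ^ x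
noncomputable def mfun (x : ℝ) : ℝ := zetaR' x / zetaR x

lemma term_eq (x : ℝ) (n : ℕ) :
    LSeries.term (fun n => (Λ n : ℂ)) (x : ℂ) n = ((Λ n / (n : ℝ) ^ x : ℝ) : ℂ) := by
  rcases eq_or_ne n 0 with rfl | hn
  · simp
  · rw [LSeries.term_of_ne_zero hn, Complex.ofReal_div,
      Complex.ofReal_cpow (Nat.cast_nonneg n)]
    norm_num

lemma summable_Lser {x : ℝ} (hx : 1 < x) : Summable (fun n : ℕ => Λ n / (n : ℝ) ^ x) := by
  have h := LSeriesSummable_vonMangoldt (s := (x : ℂ)) (by simpa using hx)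
  rw [LSeriesSummable] at h
  have h2 : Summable fun n : ℕ => ((Λ n / (n : ℝ) ^ x : ℝ) : ℂ) :=
    (summable_congr fun n => term_eq x n).mp h
  exact Complex.summable_ofReal.mp h2

lemma LSeries_eq (x : ℝ) : LSeries (fun n => (Λ n : ℂ)) (x : ℂ) = ((Lser x : ℝ) : ℂ) := by
  rw [LSeries, Lser, Complex.ofReal_tsum]
  exact tsum_congr fun n => term_eq x n

lemma zetaR_eq {x : ℝ} (hx : 1 < x) : zetaR x = ∑' n : ℕ, 1 / (n : ℝ) ^ x := by
  have h : riemannZeta (x : ℂ) = ((∑' n : ℕ, 1 / (n : ℝ) ^ x : ℝ) : ℂ) := by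
    rw [zeta_eq_tsum_one_div_nat_cpow (by simpa using hx), Complex.ofReal_tsum]
    refine tsum_congr fun n => ?_
    rw [Complex.ofReal_div, Complex.ofReal_cpow (Nat.cast_nonneg n)]
    norm_num
  rw [zetaR, h, Complex.ofReal_re]

lemma zeta_ofReal {x : ℝ} (hx : 1 < x) : riemannZeta (x : ℂ) = ((zetaR x : ℝ) : ℂ) := by
  have h : riemannZeta (x : ℂ) = ((∑' n : ℕ, 1 / (n : ℝ) ^ x : ℝ) : ℂ) := by
    rw [zeta_eq_tsum_one_div_nat_cpow (by simpa using hx), Complex.ofReal_tsum]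
    refine tsum_congr fun n => ?_
    rw [Complex.ofReal_div, Complex.ofReal_cpow (Nat.cast_nonneg n)]
    norm_num
  rw [h, zetaR_eq hx]

lemma zetaR_pos {x : ℝ} (hx : 1 < x) : 0 < zetaR x := by
  rw [zetaR_eq hx]
  have hs : Summable (fun n : ℕ => 1 / (n : ℝ) ^ x) := by
    simpa using Real.summable_one_div_nat_rpow.mpr hx
  refine Summable.tsum_pos hs (fun n => by positivity) 1 ?_
  norm_num

lemma deriv_zeta_ofReal {x : ℝ} (hx : 1 < x) :
    deriv riemannZeta (x : ℂ) = ((-(Lser x * zetaR x) : ℝ) : ℂ) := by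
  have h := LSeries_vonMangoldt_eq_deriv_riemannZeta_div (s := (x : ℂ)) (by simpa using hx)
  have hζ : riemannZeta (x : ℂ) ≠ 0 := by
    rw [zeta_ofReal hx]
    exact_mod_cast (zetaR_pos hx).ne'
  have h2 : deriv riemannZeta (x : ℂ)
      = -(LSeries (fun n => (Λ n : ℂ)) (x : ℂ) * riemannZeta (x : ℂ)) := by
    rw [h]; field_simp
  rw [h2, LSeries_eq, zeta_ofReal hx]
  push_cast
  ring

lemma zetaR'_eq {x : ℝ} (hx : 1 < x) : zetaR' x = -(Lser x * zetaR x) := by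
  rw [zetaR', deriv_zeta_ofReal hx, Complex.ofReal_re]

lemma mfun_eq {x : ℝ} (hx : 1 < x) : mfun x = -Lser x := by
  rw [mfun, zetaR'_eq hx]
  field_simp [(zetaR_pos hx).ne']

lemma Lser_lt {x y : ℝ} (hx : 1 < x) (hxy : x < y) : Lser y < Lser x := by
  refine Summable.tsum_lt_tsum_of_nonneg (i := 2)
    (fun b => div_nonneg vonMangoldt_nonneg (Real.rpow_nonneg (Nat.cast_nonneg b) _))
    (fun b => ?_) ?_ (summable_Lser hx)
  · rcases Nat.eq_zero_or_pos b with rfl | hb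
    · simp
    · have h0 : (0 : ℝ) < (b : ℝ) := by exact_mod_cast hb
      have h1 : (1 : ℝ) ≤ (b : ℝ) := by exact_mod_cast hb
      exact div_le_div_of_nonneg_left vonMangoldt_nonneg (Real.rpow_pos_of_pos h0 x)
        (Real.rpow_le_rpow_of_exponent_le h1 hxy.le)
  · have hΛ : (0 : ℝ) < Λ 2 := by
      rw [vonMangoldt_apply_prime Nat.prime_two]
      exact Real.log_pos (by norm_num)
    have h2 : (2 : ℝ) ^ x < (2 : ℝ) ^ y := by
      apply Real.rpow_lt_rpow_of_exponent_lt (by norm_num) hxy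
    rw [show ((2:ℕ):ℝ) = (2:ℝ) by norm_num]
    exact div_lt_div_of_pos_left hΛ (Real.rpow_pos_of_pos (by norm_num) x) h2

lemma Lser_pos {x : ℝ} (hx : 1 < x) : 0 < Lser x := by
  have hΛ : (0 : ℝ) < Λ 2 := by
    rw [vonMangoldt_apply_prime Nat.prime_two]
    exact Real.log_pos (by norm_num)
  refine Summable.tsum_pos (summable_Lser hx)
    (fun b => div_nonneg vonMangoldt_nonneg (Real.rpow_nonneg (Nat.cast_nonneg b) _)) 2 ?_
  exact div_pos hΛ (Real.rpow_pos_of_pos (by norm_num) x)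

lemma mfun_lt {x y : ℝ} (hx : 1 < x) (hxy : x < y) : mfun x < mfun y := by
  rw [mfun_eq hx, mfun_eq (hx.trans hxy)]
  exact neg_lt_neg (Lser_lt hx hxy)

lemma mfun_le {x y : ℝ} (hx : 1 < x) (hxy : x ≤ y) : mfun x ≤ mfun y := by
  rcases eq_or_lt_of_le hxy with rfl | h
  · exact le_rfl
  · exact (mfun_lt hx h).le

lemma mfun_neg {x : ℝ} (hx : 1 < x) : mfun x < 0 := by
  rw [mfun_eq hx]; linarith [Lser_pos hx]

end VonMangoldt

lemma hasDerivAt_zetaR {x : ℝ} (hx : x ≠ 1) : HasDerivAt zetaR (zetaR' x) x :=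
  ((differentiableAt_riemannZeta (Complex.ofReal_ne_one.mpr hx)).hasDerivAt).real_of_complex

lemma continuousAt_zetaR' {x : ℝ} (hx : x ≠ 1) : ContinuousAt zetaR' x := by
  have hU : IsOpen {s : ℂ | s ≠ 1} := isOpen_ne
  have hd : DifferentiableOn ℂ riemannZeta {s : ℂ | s ≠ 1} :=
    fun s hs => (differentiableAt_riemannZeta hs).differentiableWithinAt
  have hda : AnalyticOnNhd ℂ (deriv riemannZeta) {s : ℂ | s ≠ 1} :=
    (hd.analyticOnNhd hU).deriv
  have hc : ContinuousAt (deriv riemannZeta) (x : ℂ) :=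
    (hda (x : ℂ) (Complex.ofReal_ne_one.mpr hx)).continuousAt
  exact Complex.continuous_re.continuousAt.comp
    (hc.comp Complex.continuous_ofReal.continuousAt)

lemma continuousAt_zetaR {x : ℝ} (hx : x ≠ 1) : ContinuousAt zetaR x :=
  (hasDerivAt_zetaR hx).continuousAt

lemma continuousAt_mfun {x : ℝ} (hx : 1 < x) : ContinuousAt mfun x :=
  (continuousAt_zetaR' (by linarith)).div (continuousAt_zetaR (by linarith))
    (zetaR_pos hx).ne'

lemma hasDerivAt_log_zetaR {x : ℝ} (hx : 1 < x) :
    HasDerivAt (fun t => Real.log (zetaR t)) (mfun x) x :=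
  (hasDerivAt_zetaR (by linarith)).log (zetaR_pos hx).ne'

lemma zetaR_unbounded (B : ℝ) : ∃ x ∈ Ioo (1:ℝ) 2, B < zetaR x := by
  obtain ⟨N, hN⟩ := (Filter.tendsto_atTop.mp Real.tendsto_sum_range_one_div_nat_succ_atTop
    (B + 1)).exists
  set F : ℝ → ℝ := fun x => ∑ i ∈ Finset.range N, 1 / ((i : ℝ) + 1) ^ x with hF
  have hF1 : B + 1 ≤ F 1 := by
    rw [hF]; simpa using hN
  have hFc : Continuous F := by
    apply continuous_finset_sum
    intro i _
    have hb : ((i : ℝ) + 1) ≠ 0 := by positivity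
    have hc : Continuous fun x : ℝ => ((i : ℝ) + 1) ^ x :=
      continuous_iff_continuousAt.mpr fun b => Real.continuousAt_const_rpow hb
    exact continuous_const.div hc fun x => (Real.rpow_pos_of_pos (by positivity) x).ne'
  have hev : ∀ᶠ x in nhds (1:ℝ), B < F x :=
    hFc.continuousAt.eventually (eventually_gt_nhds (by linarith : B < F 1))
  have hev2 : ∀ᶠ x in nhdsWithin (1:ℝ) (Ioi 1), B < F x ∧ x ∈ Ioo (1:ℝ) 2 :=
    (hev.filter_mono nhdsWithin_le_nhds).and
      (Ioo_mem_nhdsGT_of_mem (by norm_num : (1:ℝ) ∈ Ico 1 2))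
  obtain ⟨x, hBx, hx⟩ := hev2.exists
  refine ⟨x, hx, lt_of_lt_of_le hBx ?_⟩
  have hx1 : 1 < x := hx.1
  have hsum : Summable (fun n : ℕ => 1 / (n : ℝ) ^ x) := by
    simpa using Real.summable_one_div_nat_rpow.mpr hx1
  have hshift : Summable (fun n : ℕ => 1 / ((n : ℝ) + 1) ^ x) := by
    have := (summable_nat_add_iff 1).mpr hsum
    simpa using this
  have hz : zetaR x = ∑' n : ℕ, 1 / ((n : ℝ) + 1) ^ x := by
    rw [zetaR_eq hx1, Summable.tsum_eq_zero_add hsum]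
    simp [Real.zero_rpow (by linarith : x ≠ 0)]
  rw [hz]
  exact Summable.sum_le_tsum (Finset.range N) (fun i _ => by positivity) hshift

lemma exists_mfun_lt (C : ℝ) : ∃ x ∈ Ioo (1:ℝ) 2, mfun x < C := by
  by_contra hcon
  push_neg at hcon
  obtain ⟨x, hx, hB⟩ := zetaR_unbounded (Real.exp (Real.log (zetaR 2) + |C|))
  have hx1 : 1 < x := hx.1
  have hx2 : x < 2 := hx.2
  have hlogx : Real.log (zetaR 2) + |C| < Real.log (zetaR x) := by
    calc Real.log (zetaR 2) + |C| = Real.log (Real.exp (Real.log (zetaR 2) + |C|)) :=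
          (Real.log_exp _).symm
      _ < Real.log (zetaR x) := Real.log_lt_log (Real.exp_pos _) hB
  obtain ⟨c, hc, hs⟩ := exists_hasDerivAt_eq_slope (fun t => Real.log (zetaR t)) mfun hx2
    (fun t ht => ((hasDerivAt_log_zetaR (lt_of_lt_of_le hx1 ht.1)).continuousAt).continuousWithinAt)
    (fun t ht => hasDerivAt_log_zetaR (hx1.trans ht.1))
  have hcC : C ≤ mfun c := hcon c ⟨hx1.trans hc.1, hc.2⟩
  have h2x : 0 < 2 - x := by linarith
  have h2x1 : 2 - x < 1 := by linarith
  have habs : |C| * (2 - x) ≤ |C| := by nlinarith [abs_nonneg C]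
  have hCle : -|C| ≤ C := neg_abs_le C
  have heq : Real.log (zetaR 2) - Real.log (zetaR x) = mfun c * (2 - x) := by
    rw [hs]; field_simp
  nlinarith [heq, mul_le_mul_of_nonneg_right hcC h2x.le]

lemma G4_pos {s L T : ℝ} (hT : 0 < T) (hL : 0 < L) (hs : 1/2 < s) : 0 < G4 s L T := by
  have hz := zetaR_pos (x := 2*s) (by linarith)
  have hr : (0:ℝ) < L ^ (1+2*s) := Real.rpow_pos_of_pos hL _
  unfold G4; positivity

lemma hasDerivAt_G4 {L T : ℝ} (hL : 0 < L) {s : ℝ} (hs : s ∈ Ioo (1/2:ℝ) 1) :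
    HasDerivAt (fun σ => G4 σ L T)
      ((-2) * (Real.log L + mfun (2*s)) * G4 s L T) s := by
  have h2s : 1 < 2*s := by have := hs.1; linarith
  have hzpos := zetaR_pos h2s
  have hA : HasDerivAt (fun σ : ℝ => L ^ (1+2*σ)) (L ^ (1+2*s) * Real.log L * 2) s := by
    have h1 : HasDerivAt (fun σ : ℝ => 1 + 2*σ) 2 s := by
      simpa using ((hasDerivAt_id s).const_mul 2).const_add (1:ℝ)
    have h2 : HasDerivAt (fun y : ℝ => L ^ y) (L ^ (1+2*s) * Real.log L) (1+2*s) :=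
      (Real.hasStrictDerivAt_const_rpow hL (1+2*s)).hasDerivAt
    exact h2.comp s h1
  have hZ : HasDerivAt (fun σ : ℝ => zetaR (2*σ)) (zetaR' (2*s) * 2) s := by
    have h1 : HasDerivAt (fun σ : ℝ => 2*σ) 2 s := by
      simpa using (hasDerivAt_id s).const_mul 2
    exact (hasDerivAt_zetaR (by linarith : (2*s) ≠ 1)).comp s h1
  have hD : HasDerivAt (fun σ => 4 * L^(1+2*σ) * zetaR (2*σ))
      (4 * (L^(1+2*s) * Real.log L * 2) * zetaR (2*s)
        + 4 * L^(1+2*s) * (zetaR' (2*s) * 2)) s := by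
    have := (hA.const_mul 4).mul hZ
    exact this.congr_deriv (by ring)
  have hDne : 4 * L^(1+2*s) * zetaR (2*s) ≠ 0 := by
    have hr : (0:ℝ) < L ^ (1+2*s) := Real.rpow_pos_of_pos hL _
    positivity
  have key := (hasDerivAt_const s T).div hD hDne
  refine key.congr_deriv ?_
  have hr : (0:ℝ) < L ^ (1+2*s) := Real.rpow_pos_of_pos hL _
  unfold G4 mfun
  field_simp
  ring

lemma Lstar_eq : Lstar = Real.exp (-(mfun 2)) := rfl
lemma Lstar_pos : 0 < Lstar := Real.exp_pos _

lemma deriv_G4 {L T : ℝ} (hL : 0 < L) {s : ℝ} (hs : s ∈ Ioo (1/2:ℝ) 1) :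
    deriv (fun σ => G4 σ L T) s = (-2) * (Real.log L + mfun (2*s)) * G4 s L T :=
  (hasDerivAt_G4 hL hs).deriv

lemma deriv_pos_iff {L T : ℝ} (hT : 0 < T) (hL : 0 < L) {s : ℝ} (hs : s ∈ Ioo (1/2:ℝ) 1) :
    0 < deriv (fun σ => G4 σ L T) s ↔ Real.log L + mfun (2*s) < 0 := by
  rw [deriv_G4 hL hs]
  have hG := G4_pos (s := s) (L := L) hT hL hs.1
  constructor
  · intro h
    by_contra hge; push_neg at hge
    nlinarith [mul_nonneg hge hG.le]
  · intro h
    nlinarith [mul_pos (show (0:ℝ) < (-2) * (Real.log L + mfun (2*s)) by linarith) hG]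

lemma part1 {T : ℝ} (hT : 0 < T) :
    ∀ L : ℝ, 0 < L → L ≤ Lstar → StrictMonoOn (fun s => G4 s L T) (Ioo (1/2:ℝ) 1) := by
  intro L hL hLs
  have hlog : Real.log L ≤ -(mfun 2) := by
    have h := Real.log_le_log hL hLs
    rwa [Lstar_eq, Real.log_exp] at h
  apply strictMonoOn_of_deriv_pos (convex_Ioo _ _)
  · intro s hs
    exact ((hasDerivAt_G4 hL hs).continuousAt).continuousWithinAt
  · rw [interior_Ioo]
    intro s hs
    rw [deriv_G4 hL hs]
    have h2s : 1 < 2*s := by have := hs.1; linarith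
    have hm : mfun (2*s) < mfun 2 := mfun_lt h2s (by have := hs.2; linarith)
    have hG := G4_pos (s := s) (L := L) hT hL hs.1
    nlinarith

lemma exists_root {L : ℝ} (hL : Lstar < L) :
    ∃ c ∈ Ioo (1/2:ℝ) 1, Real.log L + mfun (2*c) = 0 := by
  have hL0 : 0 < L := Lstar_pos.trans hL
  have hlog : -(mfun 2) < Real.log L := by
    have h := Real.log_lt_log Lstar_pos hL
    rwa [Lstar_eq, Real.log_exp] at h
  obtain ⟨x, hx, hm⟩ := exists_mfun_lt (-(Real.log L))
  set a := x/2 with ha_def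
  have ha : a ∈ Ioo (1/2:ℝ) 1 :=
    ⟨by simp [ha_def]; linarith [hx.1], by simp [ha_def]; linarith [hx.2]⟩
  have h2a : 2*a = x := by rw [ha_def]; ring
  have hHa : Real.log L + mfun (2*a) < 0 := by rw [h2a]; linarith
  have hcont : ContinuousOn (fun t => Real.log L + mfun (2*t)) (Icc a 1) := by
    intro t ht
    have h2t : 1 < 2*t := by have := ht.1; have := ha.1; nlinarith
    exact (continuousAt_const.add ((continuousAt_mfun h2t).comp
      ((continuousAt_id (x := t)).const_mul 2))).continuousWithinAt
  have hH1 : (0:ℝ) < Real.log L + mfun (2*1) := by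
    rw [show (2:ℝ)*1 = 2 by norm_num]; linarith
  have hsub := intermediate_value_Ioo ha.2.le hcont
  obtain ⟨c, hc, hceq⟩ := hsub ⟨hHa, hH1⟩
  exact ⟨c, ⟨ha.1.trans hc.1, hc.2⟩, hceq⟩

noncomputable def sfun (L : ℝ) : ℝ :=
  if h : Lstar < L then (exists_root h).choose else 3/4

lemma sfun_mem {L : ℝ} (hL : Lstar < L) : sfun L ∈ Ioo (1/2:ℝ) 1 := by
  rw [sfun, dif_pos hL]; exact (exists_root hL).choose_spec.1

lemma sfun_root {L : ℝ} (hL : Lstar < L) : Real.log L + mfun (2 * sfun L) = 0 := by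
  rw [sfun, dif_pos hL]; exact (exists_root hL).choose_spec.2

lemma H_neg_iff {L : ℝ} (hL : Lstar < L) {s : ℝ} (hs : s ∈ Ioo (1/2:ℝ) 1) :
    Real.log L + mfun (2*s) < 0 ↔ s < sfun L := by
  have h2s : 1 < 2*s := by have := hs.1; linarith
  have hroot := sfun_root hL
  have hsf := sfun_mem hL
  constructor
  · intro h
    by_contra hge; push_neg at hge
    have : mfun (2*sfun L) ≤ mfun (2*s) := mfun_le (by have := hsf.1; linarith) (by linarith)
    linarith
  · intro h
    have : mfun (2*s) < mfun (2*sfun L) := mfun_lt h2s (by linarith)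
    linarith

lemma max_lemma {L T : ℝ} (hT : 0 < T) (hL : Lstar < L) {s : ℝ}
    (hs : s ∈ Ioo (1/2:ℝ) 1) (hne : s ≠ sfun L) :
    G4 s L T < G4 (sfun L) L T := by
  have hL0 : 0 < L := Lstar_pos.trans hL
  have hsf := sfun_mem hL
  rcases lt_or_gt_of_ne hne with h | h
  · have hmono : StrictMonoOn (fun σ => G4 σ L T) (Ioc (1/2:ℝ) (sfun L)) := by
      apply strictMonoOn_of_deriv_pos (convex_Ioc _ _)
      · intro t ht
        have ht' : t ∈ Ioo (1/2:ℝ) 1 := ⟨ht.1, lt_of_le_of_lt ht.2 hsf.2⟩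
        exact ((hasDerivAt_G4 hL0 ht').continuousAt).continuousWithinAt
      · rw [interior_Ioc]
        intro t ht
        have ht' : t ∈ Ioo (1/2:ℝ) 1 := ⟨ht.1, ht.2.trans hsf.2⟩
        exact (deriv_pos_iff hT hL0 ht').mpr ((H_neg_iff hL ht').mpr ht.2)
    exact hmono ⟨hs.1, h.le⟩ ⟨hsf.1, le_rfl⟩ h
  · have hanti : StrictAntiOn (fun σ => G4 σ L T) (Ico (sfun L) 1) := by
      apply strictAntiOn_of_deriv_neg (convex_Ico _ _)
      · intro t ht
        have ht' : t ∈ Ioo (1/2:ℝ) 1 := ⟨lt_of_lt_of_le hsf.1 ht.1, ht.2⟩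
        exact ((hasDerivAt_G4 hL0 ht').continuousAt).continuousWithinAt
      · rw [interior_Ico]
        intro t ht
        have ht' : t ∈ Ioo (1/2:ℝ) 1 := ⟨hsf.1.trans ht.1, ht.2⟩
        have h2t : 1 < 2*t := by have := ht'.1; linarith
        have hroot := sfun_root hL
        have hH : 0 < Real.log L + mfun (2*t) := by
          have : mfun (2*sfun L) < mfun (2*t) :=
            mfun_lt (by have := hsf.1; linarith) (by linarith [ht.1])
          linarith
        rw [deriv_G4 hL0 ht']
        have hG := G4_pos (s := t) (L := L) hT hL0 ht'.1
        nlinarith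
    exact hanti ⟨le_rfl, hsf.2⟩ ⟨h.le, hs.2⟩ h

lemma tendsto_sfun : Tendsto sfun atTop (nhds (1/2:ℝ)) := by
  rw [tendsto_order]
  constructor
  · intro a ha
    filter_upwards [eventually_gt_atTop Lstar] with L hL
    exact ha.trans (sfun_mem hL).1
  · intro b hb
    set b' := min b (3/4 : ℝ) with hb'def
    have hb'1 : 1/2 < b' := lt_min hb (by norm_num)
    have h2b' : 1 < 2*b' := by linarith
    filter_upwards [eventually_gt_atTop Lstar,
      eventually_gt_atTop (Real.exp (-(mfun (2*b'))))] with L hL hL2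
    have hsf := sfun_mem hL
    have hlog : -(mfun (2*b')) < Real.log L := by
      have := Real.log_lt_log (Real.exp_pos _) hL2
      rwa [Real.log_exp] at this
    have hroot := sfun_root hL
    have hb's : sfun L < b' := by
      by_contra hge; push_neg at hge
      have : mfun (2*b') ≤ mfun (2*sfun L) := mfun_le h2b' (by linarith)
      linarith
    exact hb's.trans_le (min_le_left _ _)

end S17

theorem stmt17 (T : ℝ) (hT : 0 < T) :
    (∀ L : ℝ, 0 < L → L ≤ Lstar →
      StrictMonoOn (fun s => G4 s L T) (Set.Ioo (1/2:ℝ) 1)) ∧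
    ∃ sfun : ℝ → ℝ,
      (∀ L : ℝ, Lstar < L →
        sfun L ∈ Set.Ioo (1/2:ℝ) 1 ∧
        (∀ s ∈ Set.Ioo (1/2:ℝ) 1, s ≠ sfun L → G4 s L T < G4 (sfun L) L T) ∧
        (∀ s ∈ Set.Ioo (1/2:ℝ) 1,
          (0 < deriv (fun σ => G4 σ L T) s ↔ s < sfun L))) ∧
      Filter.Tendsto sfun Filter.atTop (nhds (1/2)) := by
  refine ⟨S17.part1 hT, S17.sfun, fun L hL =>
    ⟨S17.sfun_mem hL, fun s hs hne => S17.max_lemma hT hL hs hne,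
      fun s hs => ?_⟩, S17.tendsto_sfun⟩
  rw [S17.deriv_pos_iff hT (S17.Lstar_pos.trans hL) hs]
  exact S17.H_neg_iff hL hs
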